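/- arXiv:2401.18041 — 2 statements merged into one kernel-verified Lean document; each statement's English description precedes it below -/
import Mathlib

section
/- Let m : ℝ → ℝ be an odd function that is nondecreasing on [0,∞) (hence nondecreasing on all of ℝ). Then for all a, b ∈ ℝ, (m(a) − m(b))(a − b) ≥ (m(|a|) − m(|b|))(|a| − |b|) ≥ 0. -/
open MeasureTheory Filter Topology Set

noncomputable section

/-- ℝⁿ with the Euclidean norm. -/
abbrev Rn (n : ℕ) : Type := EuclideanSpace ℝ (Fin n)

/-- The measure dν_n = dx dy / |x-y|^n on ℝ^{2n}. -/
def nuMeasure (n : ℕ) : Measure (Rn n × Rn n) :=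
  volume.withDensity fun p => ENNReal.ofReal (‖p.1 - p.2‖ ^ (-(n : ℝ)))

/-- Hölder quotient `D^s u (x,y) = (u x - u y)/|x-y|^s`. -/
def Ds (n : ℕ) (s : ℝ) (u : Rn n → ℝ) (p : Rn n × Rn n) : ℝ :=
  (u p.1 - u p.2) / ‖p.1 - p.2‖ ^ s

/-- A Young function, encoded by its density `m` which is nondecreasing, right continuous,
vanishing exactly at `0`, tending to `∞` and extended to `ℝ` as an odd function. -/
structure YoungFunction where
  m : ℝ → ℝ
  nonneg : ∀ t, 0 ≤ t → 0 ≤ m t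
  mono : MonotoneOn m (Set.Ici 0)
  rightCont : ∀ t, 0 ≤ t → ContinuousWithinAt m (Set.Ici t) t
  zero_iff : ∀ t, 0 ≤ t → (m t = 0 ↔ t = 0)
  tendsto_top : Filter.Tendsto m Filter.atTop Filter.atTop
  odd : ∀ t, m (-t) = -m t

/-- `M(t) = ∫_0^{|t|} m(τ) dτ`. -/
def YoungFunction.M (Y : YoungFunction) (t : ℝ) : ℝ :=
  ∫ τ in (0:ℝ)..|t|, Y.m τ

/-- The complementary Young function `M̄(t) = sup {τ|t| - M(τ) : τ ≥ 0}`. -/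
def YoungFunction.Mbar (Y : YoungFunction) (t : ℝ) : ℝ :=
  sSup {x : ℝ | ∃ τ, 0 ≤ τ ∧ x = τ * |t| - Y.M τ}

/-- The segment property for a bounded open set. -/
def SegmentProperty {n : ℕ} (Ω : Set (Rn n)) : Prop :=
  ∃ (ι : Type) (c : ι → Rn n) (t : ℝ) (ν : ι → Rn n) (tstar : ℝ),
    0 < t ∧ 0 < tstar ∧ tstar < 1 ∧
    (∀ j, c j ∈ frontier Ω) ∧
    (∀ j, ‖ν j‖ = 1) ∧
    frontier Ω ⊆ ⋃ j, Metric.ball (c j) t ∧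
    LocallyFinite (fun j => Metric.ball (c j) t) ∧
    ∀ j, ∀ x ∈ closure Ω ∩ Metric.ball (c j) t, ∀ τ : ℝ, 0 < τ → τ < tstar →
      x + τ • ν j ∈ Ω

/-- Luxemburg norm. -/
def luxNorm {α : Type*} [MeasurableSpace α] (μ : Measure α) (M : ℝ → ℝ) (f : α → ℝ) : ℝ :=
  sInf {k : ℝ | 0 < k ∧ ∫⁻ a, ENNReal.ofReal (M (f a / k)) ∂μ ≤ 1}

/-- For an odd function `m : ℝ → ℝ` that is nondecreasing on `[0,∞)`,
one has `(m a - m b)(a - b) ≥ (m |a| - m |b|)(|a| - |b|) ≥ 0` for all `a b : ℝ`. -/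
theorem monotonicity_inequality (m : ℝ → ℝ) (hodd : ∀ t, m (-t) = -m t)
    (hmono : MonotoneOn m (Set.Ici 0)) (a b : ℝ) :
    (m a - m b) * (a - b) ≥ (m |a| - m |b|) * (|a| - |b|) ∧
      (m |a| - m |b|) * (|a| - |b|) ≥ 0 := by
  have h0 : m 0 = 0 := by have := hodd 0; simp at this; linarith
  have hnn : ∀ t, 0 ≤ t → 0 ≤ m t := fun t ht => by
    have := hmono (Set.mem_Ici.2 le_rfl) (Set.mem_Ici.2 ht) ht
    linarith
  constructor
  · rcases le_or_gt 0 a with ha | ha <;> rcases le_or_gt 0 b with hb | hb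
    · rw [abs_of_nonneg ha, abs_of_nonneg hb]
    · rw [abs_of_nonneg ha, abs_of_neg hb]
      have hb' : m b = -m (-b) := by have := hodd (-b); simp at this; linarith
      have h1 := hnn a ha
      have h2 := hnn (-b) (by linarith)
      nlinarith
    · rw [abs_of_neg ha, abs_of_nonneg hb]
      have ha' : m a = -m (-a) := by have := hodd (-a); simp at this; linarith
      have h1 := hnn b hb
      have h2 := hnn (-a) (by linarith)
      nlinarith
    · rw [abs_of_neg ha, abs_of_neg hb, hodd, hodd]
      nlinarith
  · rcases le_total |a| |b| with h | h
    · have := hmono (Set.mem_Ici.2 (abs_nonneg a)) (Set.mem_Ici.2 (abs_nonneg b)) h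
      nlinarith
    · have := hmono (Set.mem_Ici.2 (abs_nonneg b)) (Set.mem_Ici.2 (abs_nonneg a)) h
      nlinarith
end
end

section
/- Let s ∈ (0,1), let M be a Young function, and let u : ℝⁿ → ℝ be measurable. Then for every h ∈ ℝⁿ with 0 < |h| < 1/2, ∫_{ℝⁿ} M(|u(x+h) − u(x)|) dx ≤ (2^{n+1}/ω_n) ∬_{ℝ^{2n}} M(2^{s+1} |h|^s D^s u(x,y)) dν_n(x,y), where ω_n denotes the Lebesgue measure of the unit ball of ℝⁿ (both sides interpreted as values in [0,∞]). -/
open MeasureTheory Filter Topology Set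

noncomputable section

/-! Average in `y` over the ball `B(x, |h|)`. By the triangle inequality and monotonicity of `M`,
`M(|u(x+h) - u(x)|) ≤ M(2|u(x+h) - u(y)|) + M(2|u(x) - u(y)|)`, and as `x` and `x + h` both lie
within `2|h|` of `y`, each term is at most `(2|h|)^n |· - y|^{-n} M(2^{s+1}|h|^s D^s u(·, y))`.
Integrating in `x` and using translation invariance gives
`ω_n |h|^n ∫ M(|u(· + h) - u|) ≤ 2 (2|h|)^n ∬ M(2^{s+1}|h|^s D^s u) dν_n`. -/

open scoped ENNReal

namespace YoungFunction

variable (Y : YoungFunction)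

lemma intervalIntegrable_m {b : ℝ} (hb : 0 ≤ b) : IntervalIntegrable Y.m volume 0 b :=
  (Y.mono.mono (by rw [uIcc_of_le hb]; exact Icc_subset_Ici_self)).intervalIntegrable

lemma M_nonneg (t : ℝ) : 0 ≤ Y.M t :=
  intervalIntegral.integral_nonneg (abs_nonneg t) fun τ hτ => Y.nonneg τ hτ.1

lemma M_zero : Y.M 0 = 0 := by simp [M]

lemma M_abs (t : ℝ) : Y.M |t| = Y.M t := by simp [M]

lemma M_le_M_of_le {a b : ℝ} (ha : 0 ≤ a) (hab : a ≤ b) : Y.M a ≤ Y.M b := by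
  have hb := ha.trans hab
  simp only [M, abs_of_nonneg ha, abs_of_nonneg hb]
  exact intervalIntegral.integral_mono_interval le_rfl ha hab
    (ae_restrict_of_forall_mem measurableSet_Ioc fun τ hτ => Y.nonneg τ hτ.1.le)
    (Y.intervalIntegrable_m hb)

lemma M_add_le {a b : ℝ} (ha : 0 ≤ a) (hb : 0 ≤ b) :
    Y.M (a + b) ≤ Y.M (2 * a) + Y.M (2 * b) := by
  rcases le_total a b with hab | hba
  · exact (Y.M_le_M_of_le (add_nonneg ha hb) (by linarith)).trans
      (le_add_of_nonneg_left (Y.M_nonneg _))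
  · exact (Y.M_le_M_of_le (add_nonneg ha hb) (by linarith)).trans
      (le_add_of_nonneg_right (Y.M_nonneg _))

lemma measurable_M : Measurable Y.M := by
  have hmono : Monotone fun t => Y.M (max t 0) := fun a b hab =>
    Y.M_le_M_of_le (le_max_right a 0) (max_le_max hab le_rfl)
  have hM : Y.M = (fun t => Y.M (max t 0)) ∘ abs := by
    ext t
    simp [Y.M_abs]
  rw [hM]
  exact hmono.measurable.comp measurable_abs

end YoungFunction

lemma norm_add_sub_le_two_mul {E : Type*} [SeminormedAddCommGroup E] {x y h : E}
    (hxy : ‖x - y‖ ≤ ‖h‖) : ‖x + h - y‖ ≤ 2 * ‖h‖ :=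
  calc ‖x + h - y‖ = ‖(x - y) + h‖ := by rw [add_sub_right_comm]
    _ ≤ ‖x - y‖ + ‖h‖ := norm_add_le _ _
    _ ≤ 2 * ‖h‖ := by linarith

section HolderQuotient

variable {n : ℕ} {s : ℝ} {u : Rn n → ℝ}

lemma Ds_self (x : Rn n) : Ds n s u (x, x) = 0 := by simp [Ds]

lemma measurable_Ds (hu : Measurable u) : Measurable (Ds n s u) :=
  ((hu.comp measurable_fst).sub (hu.comp measurable_snd)).div
    ((measurable_fst.sub measurable_snd).norm.pow_const s)

lemma abs_sub_le_rpow_mul_abs_Ds (hs : 0 ≤ s) {x y : Rn n} {r : ℝ} (hxy : ‖x - y‖ ≤ r) :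
    |u x - u y| ≤ r ^ s * |Ds n s u (x, y)| := by
  rcases eq_or_ne x y with rfl | hne
  · simp [Ds_self]
  have hpos : 0 < ‖x - y‖ ^ s :=
    Real.rpow_pos_of_pos (norm_pos_iff.2 (sub_ne_zero.2 hne)) s
  calc |u x - u y| = ‖x - y‖ ^ s * |Ds n s u (x, y)| := by
        rw [Ds, abs_div, abs_of_pos hpos, mul_div_cancel₀ _ hpos.ne']
    _ ≤ r ^ s * |Ds n s u (x, y)| := by gcongr

lemma YoungFunction.M_two_mul_abs_sub_le (Y : YoungFunction) (hs : 0 ≤ s) {ρ : ℝ}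
    (hρ : 0 ≤ ρ) {x y : Rn n} (hxy : ‖x - y‖ ≤ 2 * ρ) :
    Y.M (2 * |u x - u y|) ≤ Y.M (2 ^ (s + 1) * ρ ^ s * Ds n s u (x, y)) := by
  rw [← Y.M_abs (2 ^ (s + 1) * ρ ^ s * _)]
  refine Y.M_le_M_of_le (by positivity) ?_
  have hC : |(2 : ℝ) ^ (s + 1) * ρ ^ s * Ds n s u (x, y)| =
      2 * ((2 * ρ) ^ s * |Ds n s u (x, y)|) := by
    rw [abs_mul, abs_of_nonneg (by positivity), Real.rpow_add_one two_ne_zero,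
      Real.mul_rpow zero_le_two hρ]
    ring
  rw [hC]
  gcongr
  exact abs_sub_le_rpow_mul_abs_Ds hs hxy

lemma YoungFunction.M_abs_sub_translate_le (Y : YoungFunction) (hs : 0 ≤ s) {h x y : Rn n}
    (hxy : ‖x - y‖ ≤ ‖h‖) :
    Y.M |u (x + h) - u x| ≤ Y.M (2 ^ (s + 1) * ‖h‖ ^ s * Ds n s u (x + h, y)) +
      Y.M (2 ^ (s + 1) * ‖h‖ ^ s * Ds n s u (x, y)) := by
  calc Y.M |u (x + h) - u x| ≤ Y.M (|u (x + h) - u y| + |u x - u y|) :=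
        Y.M_le_M_of_le (abs_nonneg _)
          (by rw [abs_sub_comm (u x)]; exact abs_sub_le _ _ _)
    _ ≤ Y.M (2 * |u (x + h) - u y|) + Y.M (2 * |u x - u y|) :=
        Y.M_add_le (abs_nonneg _) (abs_nonneg _)
    _ ≤ _ := add_le_add (Y.M_two_mul_abs_sub_le hs (norm_nonneg h) (norm_add_sub_le_two_mul hxy))
        (Y.M_two_mul_abs_sub_le hs (norm_nonneg h) (by linarith [norm_nonneg h]))

end HolderQuotient

section NuMeasure

variable {n : ℕ}

lemma measurable_nuMeasure_density :
    Measurable fun p : Rn n × Rn n => ENNReal.ofReal (‖p.1 - p.2‖ ^ (-(n : ℝ))) :=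
  ((measurable_fst.sub measurable_snd).norm.pow_const _).ennreal_ofReal

lemma lintegral_nuMeasure {f : Rn n × Rn n → ℝ≥0∞} (hf : Measurable f) :
    ∫⁻ p, f p ∂nuMeasure n =
      ∫⁻ x, ∫⁻ y, ENNReal.ofReal (‖x - y‖ ^ (-(n : ℝ))) * f (x, y) := by
  rw [nuMeasure, lintegral_withDensity_eq_lintegral_mul _ measurable_nuMeasure_density hf,
    Measure.volume_eq_prod, lintegral_prod _ (measurable_nuMeasure_density.mul hf).aemeasurable]
  rfl

lemma one_le_pow_mul_rpow_neg {t r : ℝ} (ht : 0 < t) (htr : t ≤ r) :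
    1 ≤ r ^ n * t ^ (-(n : ℝ)) := by
  rw [Real.rpow_neg ht.le, Real.rpow_natCast, ← div_eq_mul_inv, one_le_div (pow_pos ht n)]
  exact pow_le_pow_left₀ ht.le htr n

/-- On the diagonal the density of `nuMeasure` has the junk value `0 ^ (-n) = 0` (for `n > 0`),
hence the hypothesis `hf`. -/
lemma le_mul_nuMeasure_density {f : Rn n × Rn n → ℝ≥0∞} (hf : ∀ x, f (x, x) = 0)
    {x y : Rn n} {r : ℝ} (hxy : ‖x - y‖ ≤ r) :
    f (x, y) ≤
      ENNReal.ofReal (r ^ n) * (ENNReal.ofReal (‖x - y‖ ^ (-(n : ℝ))) * f (x, y)) := by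
  rcases eq_or_ne x y with rfl | hne
  · simp [hf]
  rw [← mul_assoc, ← ENNReal.ofReal_mul (pow_nonneg ((norm_nonneg _).trans hxy) n)]
  refine le_mul_of_one_le_left zero_le (ENNReal.one_le_ofReal.2 ?_)
  exact one_le_pow_mul_rpow_neg (norm_pos_iff.2 (sub_ne_zero.2 hne)) hxy

end NuMeasure

lemma lintegral_mul_measure_ball_le {E : Type*} [NormedAddCommGroup E] [MeasurableSpace E]
    [BorelSpace E] (μ : Measure E) [μ.IsAddRightInvariant] [SFinite μ] {c : E → ℝ≥0∞}
    {G : E → E → ℝ≥0∞} (hG : Measurable (Function.uncurry G)) (h : E) (r : ℝ)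
    (hc : ∀ x, ∀ y ∈ Metric.ball x r, c x ≤ G (x + h) y + G x y) :
    (∫⁻ x, c x ∂μ) * μ (Metric.ball 0 r) ≤ 2 * ∫⁻ x, ∫⁻ y, G x y ∂μ ∂μ := by
  have hball : ∀ x, μ (Metric.ball x r) = μ (Metric.ball 0 r) := by
    intro x
    rw [← measure_preimage_add_right μ x]
    congr 1
    ext y
    simp [dist_eq_norm]
  have hGx : Measurable fun x => ∫⁻ y, G x y ∂μ := hG.lintegral_prod_right'
  have hGy : ∀ x, Measurable (G x) := fun x => hG.comp measurable_prodMk_left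
  calc (∫⁻ x, c x ∂μ) * μ (Metric.ball 0 r)
      ≤ ∫⁻ x, ∫⁻ y in Metric.ball x r, c x ∂μ ∂μ := by
        simp_rw [setLIntegral_const, hball]
        exact lintegral_mul_const_le _ _
    _ ≤ ∫⁻ x, ∫⁻ y, (G (x + h) y + G x y) ∂μ ∂μ := by
        refine lintegral_mono fun x => ?_
        calc ∫⁻ y in Metric.ball x r, c x ∂μ
            ≤ ∫⁻ y in Metric.ball x r, (G (x + h) y + G x y) ∂μ :=
              setLIntegral_mono ((hGy _).add (hGy x)) (hc x)
          _ ≤ ∫⁻ y, (G (x + h) y + G x y) ∂μ := setLIntegral_le_lintegral _ _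
    _ = (∫⁻ x, ∫⁻ y, G (x + h) y ∂μ ∂μ) + ∫⁻ x, ∫⁻ y, G x y ∂μ ∂μ := by
        rw [lintegral_congr fun x => lintegral_add_left (hGy (x + h)) _]
        exact lintegral_add_left (hGx.comp (measurable_add_const h)) _
    _ = 2 * ∫⁻ x, ∫⁻ y, G x y ∂μ ∂μ := by
        rw [lintegral_add_right_eq_self (fun x => ∫⁻ y, G x y ∂μ) h, two_mul]

lemma ofReal_div_volume_ball_mul_volume_ball {n : ℕ} {ρ : ℝ} (hρ : 0 < ρ) :
    ENNReal.ofReal ((2 : ℝ) ^ (n + 1) / (volume (Metric.ball (0 : Rn n) 1)).toReal) *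
      volume (Metric.ball (0 : Rn n) ρ) = 2 * ENNReal.ofReal ((2 * ρ) ^ n) := by
  set ω := volume (Metric.ball (0 : Rn n) 1)
  have hω : 0 < ω.toReal :=
    ENNReal.toReal_pos (Metric.measure_ball_pos volume 0 one_pos).ne' measure_ball_lt_top.ne
  have hconst : (2 : ℝ) ^ (n + 1) / ω.toReal * ρ ^ n * ω.toReal = 2 * (2 * ρ) ^ n := by
    field_simp
    ring
  calc _ = ENNReal.ofReal ((2 : ℝ) ^ (n + 1) / ω.toReal * ρ ^ n) *
        ENNReal.ofReal ω.toReal := by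
        rw [Measure.addHaar_ball_of_pos _ _ hρ, finrank_euclideanSpace_fin, ← mul_assoc,
          ← ENNReal.ofReal_mul (by positivity), ENNReal.ofReal_toReal measure_ball_lt_top.ne]
    _ = ENNReal.ofReal (2 * (2 * ρ) ^ n) := by rw [← ENNReal.ofReal_mul (by positivity), hconst]
    _ = _ := by rw [ENNReal.ofReal_mul zero_le_two, ENNReal.ofReal_ofNat]

theorem modular_translation_estimate_general (n : ℕ) (s : ℝ)
    (hs : s ∈ Set.Ioo (0 : ℝ) 1) (Y : YoungFunction)
    (u : Rn n → ℝ) (hu : Measurable u)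
    (h : Rn n) (h0 : 0 < ‖h‖) :
    ∫⁻ x, ENNReal.ofReal (Y.M |u (x + h) - u x|) ≤
      ENNReal.ofReal ((2 : ℝ) ^ (n + 1) / (volume (Metric.ball (0 : Rn n) 1)).toReal) *
        ∫⁻ p, ENNReal.ofReal (Y.M ((2 : ℝ) ^ (s + 1) * ‖h‖ ^ s * Ds n s u p))
          ∂nuMeasure n := by
  set P : Rn n × Rn n → ℝ≥0∞ :=
    fun p => ENNReal.ofReal (Y.M ((2 : ℝ) ^ (s + 1) * ‖h‖ ^ s * Ds n s u p))
  have hP : Measurable P :=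
    (Y.measurable_M.comp ((measurable_Ds hu).const_mul _)).ennreal_ofReal
  have hP0 : ∀ x, P (x, x) = 0 := fun x => by simp [P, Ds_self, Y.M_zero]
  set F : Rn n → Rn n → ℝ≥0∞ :=
    fun x y => ENNReal.ofReal (‖x - y‖ ^ (-(n : ℝ))) * P (x, y)
  set K := ENNReal.ofReal ((2 * ‖h‖) ^ n)
  have hpt : ∀ x, ∀ y ∈ Metric.ball x ‖h‖,
      ENNReal.ofReal (Y.M |u (x + h) - u x|) ≤ K * F (x + h) y + K * F x y := by
    intro x y hy
    rw [Metric.mem_ball, dist_comm, dist_eq_norm] at hy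
    calc _ ≤ P (x + h, y) + P (x, y) := by
          rw [← ENNReal.ofReal_add (Y.M_nonneg _) (Y.M_nonneg _)]
          exact ENNReal.ofReal_le_ofReal (Y.M_abs_sub_translate_le hs.1.le hy.le)
      _ ≤ _ := add_le_add (le_mul_nuMeasure_density hP0 (norm_add_sub_le_two_mul hy.le))
          (le_mul_nuMeasure_density hP0 (by linarith))
  have havg := lintegral_mul_measure_ball_le volume (G := fun x y => K * F x y)
    (measurable_const.mul (measurable_nuMeasure_density.mul hP)) h ‖h‖ hpt
  rw [lintegral_congr fun x => lintegral_const_mul' _ _ ENNReal.ofReal_ne_top,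
    lintegral_const_mul' _ _ ENNReal.ofReal_ne_top, ← lintegral_nuMeasure hP] at havg
  have hV0 : volume (Metric.ball (0 : Rn n) ‖h‖) ≠ 0 :=
    (Metric.measure_ball_pos volume 0 h0).ne'
  rw [← ENNReal.mul_le_mul_iff_left hV0 measure_ball_lt_top.ne, mul_right_comm,
    ofReal_div_volume_ball_mul_volume_ball h0, mul_assoc]
  exact havg

/-- the modular translation estimate (Lemma B.1 of the paper):
for `0 < |h| < 1/2`,
`∫ M(|u(x+h) − u(x)|) dx ≤ (2^{n+1}/ω_n) ∬ M(2^{s+1}|h|^s D^s u) dν_n`,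
where `ω_n` is the Lebesgue measure of the unit ball of `ℝⁿ`. -/
theorem modular_translation_estimate (n : ℕ) (hn : 0 < n) (s : ℝ)
    (hs : s ∈ Set.Ioo (0 : ℝ) 1) (Y : YoungFunction)
    (u : Rn n → ℝ) (hu : Measurable u)
    (h : Rn n) (h0 : 0 < ‖h‖) (hh : ‖h‖ < 1 / 2) :
    ∫⁻ x, ENNReal.ofReal (Y.M |u (x + h) - u x|) ≤
      ENNReal.ofReal ((2 : ℝ) ^ (n + 1) / (volume (Metric.ball (0 : Rn n) 1)).toReal) *
        ∫⁻ p, ENNReal.ofReal (Y.M ((2 : ℝ) ^ (s + 1) * ‖h‖ ^ s * Ds n s u p))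
          ∂nuMeasure n :=
  modular_translation_estimate_general n s hs Y u hu h h0
end
end
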